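/- Let G = (V,E) be a connected, locally finite, vertex-transitive simple graph, let x₀ ∈ V, t ∈ ℕ, and write m = |B(x₀, 2t+1)| and m' = |B(x₀, t+1)|. Let (Ω, 𝒜, P) be a probability space and S : Ω → 𝒫(V) a map such that for each x ∈ V the set T_x = {ω ∈ Ω : x is a t-trifurcation of S(ω)} is measurable, and suppose there exists c > 0 with P(T_x) ≥ c for every x ∈ V. Then every finite nonempty W ⊆ V satisfies |∂W| / |W| ≥ c / (m · m'); in particular the vertex isoperimetric constant κ_V(G) = inf{ |∂A|/|A| : A ⊆ V finite nonempty } is strictly positive, i.e. G is not amenable. -/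

import Mathlib

/-- The closed ball of radius `t` around `x` in the graph `G`. -/
def GraphBall {V : Type*} (G : SimpleGraph V) (x : V) (t : ℕ) : Set V :=
  {y | G.edist x y ≤ t}

/-- The inner vertex boundary of a set `A`. -/
def InnerBoundary {V : Type*} (G : SimpleGraph V) (A : Set V) : Set V :=
  {x ∈ A | ∃ y, y ∉ A ∧ G.Adj x y}

/-- The connected component of `x` in the subgraph of `G` induced on `S`,
viewed as a subset of `V` (empty if `x ∉ S`). -/
def Comp {V : Type*} (G : SimpleGraph V) (S : Set V) (x : V) : Set V :=
  {y | ∃ (hx : x ∈ S) (hy : y ∈ S), (G.induce S).Reachable ⟨x, hx⟩ ⟨y, hy⟩}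

/-- The subgraph of `G` induced on `S` has at least `n` infinite connected
components. -/
def AtLeastInfComps {V : Type*} (G : SimpleGraph V) (S : Set V) (n : ℕ) : Prop :=
  ∃ f : Fin n → V, (∀ i, f i ∈ S ∧ (Comp G S (f i)).Infinite) ∧
    Function.Injective (fun i => Comp G S (f i))

/-- `x` is a `t`-trifurcation of `S`: it lies in an infinite component `C` of `S`
and the subgraph induced on `C \ C_{x,t}(S)` has at least `3` infinite components. -/
def IsTrifurcation {V : Type*} (G : SimpleGraph V) (S : Set V) (t : ℕ) (x : V) : Prop :=
  x ∈ S ∧ (Comp G S x).Infinite ∧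
    AtLeastInfComps G (Comp G S x \ Comp G (S ∩ GraphBall G x t) x) 3

open MeasureTheory

/-!
Fix `S` and a finite `W`, and let `N` be a maximal set of trifurcations in `W` that are pairwise
more than `2t+1` apart, so that at most `m |N|` trifurcations lie in `W`. A point of `N` whose
`t`-ball meets `∂W` is charged to such a boundary vertex, injectively. For any other point `x`,
every infinite branch of its cluster at `C_{x,t}(S)` leaves `W` through `∂W`. Fix a boundary
vertex `b₀` of the cluster; the boundary vertices outside the branch of `b₀` at `x` form a
nonempty set `U_x`, and for two such points these sets are distinct and nested or disjoint, since
every vertex outside both local clusters lies in the branch at `x` facing `y` or in the branch at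
`y` facing `x`. A laminar family of nonempty subsets of `∂W` has fewer than `2|∂W|` members, so
there are at most `3m|∂W|` trifurcations in `W`; a trifurcation has three branches attached to
its local cluster, so `m' ≥ 3`. Taking expectations, `c |W| ≤ 3m |∂W| ≤ m m' |∂W|`.
-/

section

variable {V : Type*} {G : SimpleGraph V}

namespace SimpleGraph

def JoinedIn (G : SimpleGraph V) (S : Set V) (x y : V) : Prop :=
  ∃ p : G.Walk x y, ∀ z ∈ p.support, z ∈ S

variable {S T K W : Set V} {x y z : V}

lemma Adj.joinedIn (h : G.Adj x y) (hx : x ∈ S) (hy : y ∈ S) : G.JoinedIn S x y :=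
  ⟨h.toWalk, by simp [hx, hy]⟩

namespace JoinedIn

lemma right_mem (h : G.JoinedIn S x y) : y ∈ S :=
  let ⟨p, hp⟩ := h; hp _ p.end_mem_support

lemma refl (hx : x ∈ S) : G.JoinedIn S x x :=
  ⟨.nil, by simpa⟩

lemma symm (h : G.JoinedIn S x y) : G.JoinedIn S y x :=
  let ⟨p, hp⟩ := h; ⟨p.reverse, fun z hz => hp z (by simpa using hz)⟩

lemma trans (h : G.JoinedIn S x y) (h' : G.JoinedIn S y z) : G.JoinedIn S x z :=
  let ⟨p, hp⟩ := h
  let ⟨q, hq⟩ := h'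
  ⟨p.append q, fun w hw => (Walk.mem_support_append_iff p q).mp hw |>.elim (hp w) (hq w)⟩

lemma mono (hST : S ⊆ T) (h : G.JoinedIn S x y) : G.JoinedIn T x y :=
  let ⟨p, hp⟩ := h; ⟨p, fun z hz => hST (hp z hz)⟩

lemma exists_adj_mem (h : G.JoinedIn S x y) (hx : x ∉ K) (hy : y ∈ K) :
    ∃ u v, G.JoinedIn (S \ K) x u ∧ v ∈ S ∧ v ∈ K ∧ G.Adj u v := by
  obtain ⟨p, hp⟩ := h
  induction p with
  | nil => exact absurd hy hx
  | @cons a b c hab q ih =>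
    have ha : a ∈ S := hp a (by simp)
    have hb : b ∈ S := hp b (by simp)
    by_cases hbK : b ∈ K
    · exact ⟨a, b, refl ⟨ha, hx⟩, hb, hbK, hab⟩
    · obtain ⟨u, v, hbu, hv⟩ := ih hbK hy fun z hz => hp z (by simp [hz])
      exact ⟨u, v, (hab.joinedIn (S := S \ K) ⟨ha, hx⟩ ⟨hb, hbK⟩).trans hbu, hv⟩

lemma exists_mem_innerBoundary (h : G.JoinedIn S x y) (hx : x ∈ W) (hy : y ∉ W) :
    ∃ z ∈ S, z ∈ InnerBoundary G W := by
  obtain ⟨u, v, hu, -, hv, huv⟩ := h.exists_adj_mem (K := Wᶜ) (not_not.mpr hx) hy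
  exact ⟨u, hu.right_mem.1, not_not.mp hu.right_mem.2, v, hv, huv⟩

end JoinedIn

end SimpleGraph

section Comp

variable {S T W : Set V} {x y z : V}

lemma mem_comp_iff : y ∈ Comp G S x ↔ G.JoinedIn S x y := by
  constructor
  · rintro ⟨hx, hy, ⟨q⟩⟩
    have hq : ∀ z ∈ (q.map (SimpleGraph.Embedding.induce S).toHom).support, z ∈ S := by
      simp only [SimpleGraph.Walk.support_map, List.mem_map]
      rintro _ ⟨z, -, rfl⟩
      exact z.2
    exact ⟨_, hq⟩
  · rintro ⟨p, hp⟩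
    exact ⟨hp _ p.start_mem_support, hp _ p.end_mem_support, ⟨p.induce S hp⟩⟩

lemma comp_subset : Comp G S x ⊆ S :=
  fun _ h => (mem_comp_iff.mp h).right_mem

lemma mem_comp_self (hx : x ∈ S) : x ∈ Comp G S x :=
  mem_comp_iff.mpr (.refl hx)

lemma mem_comp_comm : y ∈ Comp G S x ↔ x ∈ Comp G S y := by
  simp only [mem_comp_iff]
  exact ⟨fun h => h.symm, fun h => h.symm⟩

lemma comp_eq_of_mem (h : y ∈ Comp G S x) : Comp G S y = Comp G S x := by
  ext z
  simp only [mem_comp_iff]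
  have hxy := mem_comp_iff.mp h
  exact ⟨hxy.trans, hxy.symm.trans⟩

lemma comp_eq_comp_of_mem (hx : z ∈ Comp G S x) (hy : z ∈ Comp G S y) :
    Comp G S x = Comp G S y :=
  (comp_eq_of_mem hx).symm.trans (comp_eq_of_mem hy)

lemma joinedIn_comp_of_mem (h : y ∈ Comp G S x) : G.JoinedIn (Comp G S x) x y := by
  classical
  obtain ⟨p, hp⟩ := mem_comp_iff.mp h
  exact ⟨p, fun z hz => mem_comp_iff.mpr
    ⟨p.takeUntil z hz, fun w hw => hp w (p.support_takeUntil_subset_support hz hw)⟩⟩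

lemma joinedIn_comp (hy : y ∈ Comp G S x) (hz : z ∈ Comp G S x) :
    G.JoinedIn (Comp G S x) y z :=
  (joinedIn_comp_of_mem hy).symm.trans (joinedIn_comp_of_mem hz)

lemma comp_subset_comp (h : Comp G T x ⊆ S) : Comp G T x ⊆ Comp G S x :=
  fun _ hy => mem_comp_iff.mpr ((joinedIn_comp_of_mem hy).mono h)

lemma innerBoundary_inter_comp_nonempty (hW : W.Finite) (hinf : (Comp G S x).Infinite)
    (hy : y ∈ Comp G S x) (hyW : y ∈ W) : (InnerBoundary G W ∩ Comp G S x).Nonempty := by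
  obtain ⟨w, hw, hwW⟩ := (hinf.sdiff hW).nonempty
  obtain ⟨b, hb, hbW⟩ := (joinedIn_comp hy hw).exists_mem_innerBoundary hyW hwW
  exact ⟨b, hbW, hb⟩

end Comp

section GraphBall

variable {x y z : V} {r s : ℕ}

lemma mem_graphBall_self : x ∈ GraphBall G x r := by
  simp [GraphBall]

lemma mem_graphBall_comm : y ∈ GraphBall G x r ↔ x ∈ GraphBall G y r := by
  simp [GraphBall, SimpleGraph.edist_comm]

lemma graphBall_mono (h : r ≤ s) : GraphBall G x r ⊆ GraphBall G x s :=
  fun z hz => show G.edist x z ≤ s from le_trans hz (by exact_mod_cast h)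

lemma mem_graphBall_add (hx : z ∈ GraphBall G x r) (hy : z ∈ GraphBall G y s) :
    y ∈ GraphBall G x (r + s) :=
  calc G.edist x y ≤ G.edist x z + G.edist z y := SimpleGraph.edist_triangle
    _ ≤ r + s := add_le_add hx (SimpleGraph.edist_comm (u := y) ▸ hy)
    _ = (r + s : ℕ) := by norm_cast

lemma SimpleGraph.Adj.mem_graphBall_succ (h : G.Adj y z) (hy : y ∈ GraphBall G x r) :
    z ∈ GraphBall G x (r + 1) :=
  calc G.edist x z ≤ G.edist x y + G.edist y z := SimpleGraph.edist_triangle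
    _ ≤ r + 1 := add_le_add hy (SimpleGraph.edist_eq_one_iff_adj.mpr h).le
    _ = (r + 1 : ℕ) := by norm_cast

lemma SimpleGraph.Hom.edist_le {W : Type*} {H : SimpleGraph W} (f : G →g H) (a b : V) :
    H.edist (f a) (f b) ≤ G.edist a b := by
  by_cases h : G.Reachable a b
  · obtain ⟨p, hp⟩ := h.exists_walk_length_eq_edist
    rw [← hp, ← p.length_map f]
    exact (p.map f).edist_le
  · simp [SimpleGraph.edist_eq_top_of_not_reachable h]

lemma SimpleGraph.Iso.edist_eq {W : Type*} {H : SimpleGraph W} (φ : G ≃g H) (a b : V) :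
    H.edist (φ a) (φ b) = G.edist a b :=
  le_antisymm (Hom.edist_le φ.toHom a b) (by simpa using Hom.edist_le φ.symm.toHom (φ a) (φ b))

lemma image_graphBall (φ : G ≃g G) : φ '' GraphBall G x r = GraphBall G (φ x) r := by
  ext y
  simp only [GraphBall, Set.mem_image, Set.mem_ofPred_eq]
  constructor
  · rintro ⟨z, hz, rfl⟩
    rwa [φ.edist_eq]
  · intro hy
    exact ⟨φ.symm y, by rwa [← φ.edist_eq, φ.apply_symm_apply], φ.apply_symm_apply y⟩

lemma ncard_graphBall_eq (htrans : ∀ x y : V, ∃ φ : G ≃g G, φ x = y) (x y : V) (r : ℕ) :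
    (GraphBall G y r).ncard = (GraphBall G x r).ncard := by
  obtain ⟨φ, rfl⟩ := htrans x y
  rw [← image_graphBall, Set.ncard_image_of_injective _ φ.injective]

lemma graphBall_finite (hlf : ∀ v : V, (G.neighborSet v).Finite) (x : V) :
    ∀ r, (GraphBall G x r).Finite
  | 0 => (Set.finite_singleton x).subset fun z hz => by
    have : G.edist x z = 0 :=
      nonpos_iff_eq_zero.mp (by exact_mod_cast (hz : G.edist x z ≤ (0 : ℕ)))
    simp [(SimpleGraph.edist_eq_zero_iff.mp this).symm]
  | r + 1 => by
    refine ((graphBall_finite hlf x r).biUnion fun y _ => (hlf y).insert y).subset fun z hz => ?_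
    have hzx : G.edist z x ≠ ⊤ :=
      SimpleGraph.edist_comm (u := x) ▸ ne_top_of_le_ne_top (by simp) hz
    obtain ⟨p, hp⟩ := SimpleGraph.exists_walk_of_edist_ne_top hzx
    cases p with
    | nil => exact Set.mem_biUnion mem_graphBall_self (Set.mem_insert _ _)
    | @cons _ b _ hzb q =>
      refine Set.mem_biUnion (x := b) ?_ (Or.inr hzb.symm)
      have hlen : q.length + 1 ≤ r + 1 := by
        have : G.edist x z ≤ (r + 1 : ℕ) := hz
        rw [SimpleGraph.edist_comm, ← hp] at this
        simpa using this
      exact mem_graphBall_comm.mp (q.edist_le.trans (by exact_mod_cast Nat.le_of_succ_le_succ hlen))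

end GraphBall

section Laminar

open Finset

variable {α : Type*}

lemma Finset.disjoint_of_maximal_of_laminar {F : Finset (Finset α)}
    (hlam : ∀ A ∈ F, ∀ B ∈ F, A ⊆ B ∨ B ⊆ A ∨ Disjoint A B) {A B : Finset α}
    (hA : Maximal (· ∈ F) A) (hB : Maximal (· ∈ F) B) (hAB : A ≠ B) : Disjoint A B := by
  rcases hlam A hA.1 B hB.1 with h | h | h
  · exact absurd (le_antisymm h (hA.2 hB.1 h)) hAB
  · exact absurd (le_antisymm (hB.2 hA.1 h) h) hAB
  · exact h

lemma Finset.sum_card_le_card_of_maximal_of_laminar [DecidableEq α] {X : Finset α}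
    {F M : Finset (Finset α)} (hlam : ∀ A ∈ F, ∀ B ∈ F, A ⊆ B ∨ B ⊆ A ∨ Disjoint A B)
    (hMX : ∀ B ∈ M, B ⊆ X) (hM : ∀ B ∈ M, Maximal (· ∈ F) B) : ∑ B ∈ M, #B ≤ #X := by
  rw [← card_biUnion fun A hA B hB => disjoint_of_maximal_of_laminar hlam (hM A hA) (hM B hB)]
  exact card_le_card (biUnion_subset.mpr hMX)

lemma Finset.card_le_sum_card_filter_subset [DecidableEq α] {F M : Finset (Finset α)}
    (h : ∀ A ∈ F, ∃ B ∈ M, A ⊆ B) : #F ≤ ∑ B ∈ M, #{A ∈ F | A ⊆ B} := by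
  refine (card_le_card fun A hA => ?_).trans card_biUnion_le
  obtain ⟨B, hB, hAB⟩ := h A hA
  exact mem_biUnion.mpr ⟨B, hB, mem_filter.mpr ⟨hA, hAB⟩⟩

theorem Finset.card_le_two_mul_card_sub_one_of_laminar [DecidableEq α] {X : Finset α}
    {F : Finset (Finset α)} (hsub : ∀ A ∈ F, A ⊆ X) (hne : ∀ A ∈ F, A.Nonempty)
    (hlam : ∀ A ∈ F, ∀ B ∈ F, A ⊆ B ∨ B ⊆ A ∨ Disjoint A B) :
    #F ≤ 2 * #X - 1 := by
  classical
  induction X using Finset.strongInduction generalizing F with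
  | H X ih =>
  -- the members other than `X` split into the families below the maximal ones, which are
  -- proper subsets of `X` and pairwise disjoint
  set F' := F.erase X
  set M := {A ∈ F' | Maximal (· ∈ F') A}
  have hlam' : ∀ A ∈ F', ∀ B ∈ F', A ⊆ B ∨ B ⊆ A ∨ Disjoint A B :=
    fun A hA B hB => hlam A (mem_of_mem_erase hA) B (mem_of_mem_erase hB)
  have hbelow : ∀ A ∈ F', ∃ B ∈ M, A ⊆ B := fun A hA =>
    let ⟨B, hAB, hB⟩ := F'.exists_le_maximal hA
    ⟨B, mem_filter.mpr ⟨hB.1, hB⟩, hAB⟩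
  have hssub : ∀ B ∈ M, B ⊂ X := fun B hB =>
    have hB := (mem_filter.mp hB).1
    (hsub B (mem_of_mem_erase hB)).ssubset_of_ne (ne_of_mem_erase hB)
  have hfibre : ∀ B ∈ M, #{A ∈ F' | A ⊆ B} + 1 ≤ 2 * #B := fun B hB => by
    have := ih B (hssub B hB) (F := {A ∈ F' | A ⊆ B}) (fun A hA => (mem_filter.mp hA).2)
      (fun A hA => hne A (mem_of_mem_erase (mem_filter.mp hA).1))
      (fun A hA B hB => hlam' A (mem_filter.mp hA).1 B (mem_filter.mp hB).1)
    have := (hne B (mem_of_mem_erase (mem_filter.mp hB).1)).card_pos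
    omega
  have hsum : ∑ B ∈ M, #B ≤ #X := sum_card_le_card_of_maximal_of_laminar hlam'
    (fun B hB => (hssub B hB).subset) fun B hB => (mem_filter.mp hB).2
  have hM_one : #M = 1 → ∑ B ∈ M, #B < #X := fun h => by
    obtain ⟨B, hB⟩ := card_eq_one.mp h
    rw [hB, sum_singleton]
    exact card_lt_card (hssub B (hB ▸ mem_singleton_self B))
  have hM_zero : #M = 0 → #F' = 0 := fun h => by
    rw [card_eq_zero] at h ⊢
    exact eq_empty_of_forall_notMem fun A hA => by simpa [h] using hbelow A hA
  have hF : #F - 1 ≤ #F' := pred_card_le_card_erase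
  have hX : 0 < #F → 0 < #X := fun h => by
    obtain ⟨A, hA⟩ := card_pos.mp h
    exact card_pos.mpr ((hne A hA).mono (hsub A hA))
  have : #F' + #M ≤ 2 * ∑ B ∈ M, #B :=
    calc #F' + #M ≤ ∑ B ∈ M, (#{A ∈ F' | A ⊆ B} + 1) := by
          rw [sum_add_distrib, sum_const, smul_eq_mul, mul_one]
          exact Nat.add_le_add_right (card_le_sum_card_filter_subset hbelow) _
      _ ≤ ∑ B ∈ M, 2 * #B := sum_le_sum hfibre
      _ = 2 * ∑ B ∈ M, #B := (mul_sum ..).symm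
  omega

lemma Set.ncard_le_two_mul_ncard_sub_one_of_laminar {ι : Type*} {I : Set ι} {X : Set α}
    (hI : I.Finite) (hX : X.Finite) {f : ι → Set α}
    (hsub : ∀ i ∈ I, f i ⊆ X) (hne : ∀ i ∈ I, (f i).Nonempty)
    (hlam : I.Pairwise fun i j => (f i ⊆ f j ∨ f j ⊆ f i ∨ Disjoint (f i) (f j)) ∧ f i ≠ f j) :
    I.ncard ≤ 2 * X.ncard - 1 := by
  classical
  set g : ι → Finset α := fun i => {a ∈ hX.toFinset | a ∈ f i}
  have hg : ∀ i ∈ I, (g i : Set α) = f i := fun i hi => by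
    ext a
    simpa [g] using fun ha => hsub i hi ha
  have hinj : Set.InjOn g I := fun i hi j hj hij => by
    by_contra hne
    exact (hlam hi hj hne).2 (by rw [← hg i hi, ← hg j hj, hij])
  rw [Set.ncard_eq_toFinset_card _ hI, Set.ncard_eq_toFinset_card _ hX,
    ← Finset.card_image_of_injOn (by simpa using hinj)]
  refine Finset.card_le_two_mul_card_sub_one_of_laminar ?_ ?_ ?_
  · simp only [Finset.mem_image, Set.Finite.mem_toFinset]
    rintro _ ⟨i, -, rfl⟩
    exact Finset.filter_subset _ _
  · simp only [Finset.mem_image, Set.Finite.mem_toFinset]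
    rintro _ ⟨i, hi, rfl⟩
    exact Finset.coe_nonempty.mp (hg i hi ▸ hne i hi)
  · simp only [Finset.mem_image, Set.Finite.mem_toFinset]
    rintro _ ⟨i, hi, rfl⟩ _ ⟨j, hj, rfl⟩
    rcases eq_or_ne i j with rfl | hij
    · exact Or.inl subset_rfl
    · rw [← Finset.coe_subset, ← Finset.coe_subset, ← Finset.disjoint_coe, hg i hi, hg j hj]
      exact (hlam hi hj hij).1

end Laminar

lemma Set.Finite.exists_subset_pairwise_not_forall_exists {α : Type*} {r : α → α → Prop}
    [Std.Refl r] [Std.Symm r] {T : Set α} (hT : T.Finite) :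
    ∃ N ⊆ T, N.Pairwise (fun a b => ¬ r a b) ∧ ∀ z ∈ T, ∃ y ∈ N, r y z := by
  have hfin : {N | N ⊆ T ∧ N.Pairwise fun a b => ¬ r a b}.Finite :=
    hT.finite_subsets.subset fun N hN => hN.1
  obtain ⟨N, ⟨hNT, hN⟩, hmax⟩ := hfin.exists_maximal ⟨∅, Set.empty_subset T, Set.pairwise_empty _⟩
  refine ⟨N, hNT, hN, fun z hz => ?_⟩
  by_contra! hfar
  have hins : insert z N ∈ {N | N ⊆ T ∧ N.Pairwise fun a b => ¬ r a b} :=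
    ⟨Set.insert_subset hz hNT, Set.pairwise_insert.mpr ⟨hN, fun b hb _ =>
      ⟨fun h => hfar b hb (Std.Symm.symm _ _ h), fun h => hfar b hb h⟩⟩⟩
  exact hfar z (hmax hins (Set.subset_insert z N) (Set.mem_insert z N)) (Std.Refl.refl z)

open Classical in
lemma MeasureTheory.sum_measure_le_of_forall_card_le {ι Ω : Type*} [MeasurableSpace Ω]
    (μ : Measure Ω) (s : Finset ι) {A : ι → Set Ω} (hA : ∀ i ∈ s, MeasurableSet (A i)) {N : ℕ}
    (hN : ∀ ω, (s.filter (ω ∈ A ·)).card ≤ N) :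
    ∑ i ∈ s, μ (A i) ≤ N * μ Set.univ := by
  calc ∑ i ∈ s, μ (A i) = ∫⁻ ω, ∑ i ∈ s, (A i).indicator 1 ω ∂μ := by
        rw [lintegral_finsetSum _ fun i hi => measurable_one.indicator (hA i hi)]
        exact Finset.sum_congr rfl fun i hi => (lintegral_indicator_one (hA i hi)).symm
    _ ≤ ∫⁻ _, (N : ENNReal) ∂μ := lintegral_mono fun ω => by
        simpa [Set.indicator_apply, Finset.sum_boole] using (Nat.cast_le (α := ENNReal)).mpr (hN ω)
    _ = N * μ Set.univ := lintegral_const _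

lemma Function.Injective.exists_ne_ne_of_fin_three {β : Type*} {f : Fin 3 → β}
    (hf : Function.Injective f) (a : β) : ∃ i j, f i ≠ f j ∧ f i ≠ a ∧ f j ≠ a := by
  by_cases h0 : f 0 = a
  · exact ⟨1, 2, hf.ne (by decide), h0 ▸ hf.ne (by decide), h0 ▸ hf.ne (by decide)⟩
  by_cases h1 : f 1 = a
  · exact ⟨0, 2, hf.ne (by decide), h0, h1 ▸ hf.ne (by decide)⟩
  exact ⟨0, 1, hf.ne (by decide), h0, h1⟩

section Trifurcation

variable {S W : Set V} {t : ℕ} {x y z e b₀ : V}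

/-- The local cluster `C_{x,t}(S)`. -/
def localCluster (G : SimpleGraph V) (S : Set V) (t : ℕ) (x : V) : Set V :=
  Comp G (S ∩ GraphBall G x t) x

def branch (G : SimpleGraph V) (S : Set V) (t : ℕ) (x e : V) : Set V :=
  Comp G (Comp G S x \ localCluster G S t x) e

lemma localCluster_subset_graphBall : localCluster G S t x ⊆ GraphBall G x t :=
  fun _ h => (comp_subset h).2

lemma localCluster_subset_comp : localCluster G S t x ⊆ Comp G S x :=
  comp_subset_comp fun _ h => (comp_subset h).1

lemma mem_localCluster_self (hx : x ∈ S) : x ∈ localCluster G S t x :=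
  mem_comp_self ⟨hx, mem_graphBall_self⟩

lemma branch_subset : branch G S t x e ⊆ Comp G S x \ localCluster G S t x :=
  comp_subset

lemma exists_adj_localCluster (hx : x ∈ S) (he : e ∈ Comp G S x \ localCluster G S t x) :
    ∃ u ∈ branch G S t x e, ∃ v ∈ localCluster G S t x, G.Adj u v := by
  obtain ⟨u, v, hu, -, hv, huv⟩ :=
    (joinedIn_comp he.1 (mem_comp_self hx)).exists_adj_mem he.2 (mem_localCluster_self hx)
  exact ⟨u, mem_comp_iff.mpr hu, v, hv, huv⟩

lemma IsTrifurcation.three_le_ncard_graphBall (hlf : ∀ v : V, (G.neighborSet v).Finite)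
    (hx : IsTrifurcation G S t x) : 3 ≤ (GraphBall G x (t + 1)).ncard := by
  obtain ⟨f, hf, hinj⟩ := hx.2.2
  choose u hu v hv huv using fun i => exists_adj_localCluster (t := t) hx.1 (hf i).1
  have hu_inj : Function.Injective u := fun i j hij =>
    hinj ((comp_eq_of_mem (hu i)).symm.trans (hij ▸ comp_eq_of_mem (hu j)))
  calc 3 = (Set.range u).ncard := by simp [Set.ncard_range_of_injective hu_inj]
    _ ≤ _ := Set.ncard_le_ncard (Set.range_subset_iff.mpr fun i =>
        (huv i).symm.mem_graphBall_succ (localCluster_subset_graphBall (hv i)))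
      (graphBall_finite hlf x _)

structure IsDeepTrifurcation (G : SimpleGraph V) (S W : Set V) (t : ℕ) (x : V) : Prop where
  mem : x ∈ W
  isTrifurcation : IsTrifurcation G S t x
  disjoint_innerBoundary : Disjoint (InnerBoundary G W) (GraphBall G x t)

def markSet (G : SimpleGraph V) (S W : Set V) (t : ℕ) (x b₀ : V) : Set V :=
  {b ∈ InnerBoundary G W ∩ Comp G S x | b ∉ branch G S t x b₀}

namespace IsDeepTrifurcation

lemma notMem_localCluster (hx : IsDeepTrifurcation G S W t x) {b : V}
    (hb : b ∈ InnerBoundary G W) : b ∉ localCluster G S t x :=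
  fun h => Set.disjoint_left.mp hx.disjoint_innerBoundary hb (localCluster_subset_graphBall h)

lemma localCluster_subset (hx : IsDeepTrifurcation G S W t x) : localCluster G S t x ⊆ W :=
  fun k hk => by_contra fun hkW => by
    obtain ⟨b, hb, hbW⟩ := (joinedIn_comp_of_mem hk).exists_mem_innerBoundary hx.mem hkW
    exact hx.notMem_localCluster hbW hb

/-- Each infinite branch leaves `W`, and it can only do so through `∂W`: it is attached to the
local cluster, which lies in `W` away from `∂W`. -/
lemma innerBoundary_inter_branch_nonempty (hW : W.Finite) (hx : IsDeepTrifurcation G S W t x)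
    (he : e ∈ Comp G S x \ localCluster G S t x) (hinf : (branch G S t x e).Infinite) :
    (InnerBoundary G W ∩ branch G S t x e).Nonempty := by
  obtain ⟨u, hu, v, hv, huv⟩ := exists_adj_localCluster hx.isTrifurcation.1 he
  have huW : u ∈ W := by_contra fun huW =>
    hx.notMem_localCluster ⟨hx.localCluster_subset hv, u, huW, huv.symm⟩ hv
  exact innerBoundary_inter_comp_nonempty hW hinf hu huW

lemma exists_mem_markSet (hW : W.Finite) (hx : IsDeepTrifurcation G S W t x) (b₀ : V) :
    ∃ b₁ ∈ markSet G S W t x b₀, ∃ b₂ ∈ markSet G S W t x b₀,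
      branch G S t x b₁ ≠ branch G S t x b₂ := by
  obtain ⟨f, hf, hinj⟩ := hx.isTrifurcation.2.2
  obtain ⟨i, j, hij, hi, hj⟩ := hinj.exists_ne_ne_of_fin_three (branch G S t x b₀)
  obtain ⟨b₁, hb₁W, hb₁⟩ := hx.innerBoundary_inter_branch_nonempty hW (hf i).1 (hf i).2
  obtain ⟨b₂, hb₂W, hb₂⟩ := hx.innerBoundary_inter_branch_nonempty hW (hf j).1 (hf j).2
  refine ⟨b₁, ⟨⟨hb₁W, (branch_subset hb₁).1⟩, fun h => hi (comp_eq_comp_of_mem hb₁ h)⟩,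
    b₂, ⟨⟨hb₂W, (branch_subset hb₂).1⟩, fun h => hj (comp_eq_comp_of_mem hb₂ h)⟩, ?_⟩
  rwa [branch, branch, comp_eq_of_mem hb₁, comp_eq_of_mem hb₂]

lemma not_markSet_subset_branch (hW : W.Finite) (hx : IsDeepTrifurcation G S W t x)
    (b₀ e : V) :
    ¬ markSet G S W t x b₀ ⊆ branch G S t x e := fun h => by
  obtain ⟨b₁, h₁, b₂, h₂, hne⟩ := hx.exists_mem_markSet hW b₀
  exact hne ((comp_eq_of_mem (h h₁)).trans (comp_eq_of_mem (h h₂)).symm)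

end IsDeepTrifurcation

lemma disjoint_localCluster (hsep : y ∉ GraphBall G x (2 * t + 1)) :
    Disjoint (localCluster G S t x) (localCluster G S t y) :=
  Set.disjoint_left.mpr fun _ hzx hzy => hsep <| graphBall_mono (by omega)
    (mem_graphBall_add (localCluster_subset_graphBall hzx) (localCluster_subset_graphBall hzy))

lemma localCluster_subset_comp_diff
    (hdisj : Disjoint (localCluster G S t x) (localCluster G S t y)) :
    localCluster G S t x ⊆ Comp G (Comp G S x \ localCluster G S t y) x :=
  comp_subset_comp fun _ hz => ⟨localCluster_subset_comp hz, Set.disjoint_left.mp hdisj hz⟩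

lemma mem_branch_or_mem_branch (hy : y ∈ S) (hC : Comp G S y = Comp G S x)
    (hdisj : Disjoint (localCluster G S t x) (localCluster G S t y))
    (hz : z ∈ Comp G S x) (hzy : z ∉ localCluster G S t y) :
    z ∈ branch G S t y x ∨ z ∈ branch G S t x y := by
  simp only [branch, hC]
  refine or_iff_not_imp_left.mpr fun hzX => ?_
  obtain ⟨u, v, hzu, -, hv, huv⟩ :=
    (joinedIn_comp hz (hC ▸ mem_comp_self hy)).exists_adj_mem hzy (mem_localCluster_self hy)
  -- up to `u` the walk from `z` to `y` stays in the branch of `z` at `y`, and this branch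
  -- does not meet the local cluster of `x`, which lies in the branch of `x` at `y`
  have hZ : Comp G (Comp G S x \ localCluster G S t y) z ⊆ Comp G S x \ localCluster G S t x :=
    fun w hw => ⟨(comp_subset hw).1, fun hwK =>
      hzX (comp_eq_comp_of_mem hw (localCluster_subset_comp_diff hdisj hwK) ▸
        mem_comp_self ⟨hz, hzy⟩)⟩
  have hY : localCluster G S t y ⊆ Comp G S x \ localCluster G S t x :=
    fun w hw => ⟨hC ▸ localCluster_subset_comp hw, Set.disjoint_right.mp hdisj hw⟩
  have hu := mem_comp_iff.mpr hzu
  exact mem_comp_iff.mpr ((joinedIn_comp_of_mem hu).mono hZ |>.trans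
    (huv.joinedIn (hZ hu) (hY hv)) |>.trans ((joinedIn_comp_of_mem hv).symm.mono hY)).symm

lemma markSet_subset_branch (hy : IsDeepTrifurcation G S W t y) (hC : Comp G S y = Comp G S x)
    (hdisj : Disjoint (localCluster G S t x) (localCluster G S t y))
    (hb₀ : b₀ ∈ branch G S t x y) : markSet G S W t x b₀ ⊆ branch G S t y x := by
  rintro b ⟨⟨hbW, hbC⟩, hb⟩
  refine (mem_branch_or_mem_branch hy.isTrifurcation.1 hC hdisj hbC
    (hy.notMem_localCluster hbW)).resolve_right fun hbY => hb ?_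
  rwa [branch, comp_eq_of_mem hb₀]

lemma innerBoundary_inter_branch_subset_markSet (hb₀ : b₀ ∉ branch G S t y x) :
    InnerBoundary G W ∩ branch G S t y x ⊆ markSet G S W t y b₀ :=
  fun b ⟨hbW, hbX⟩ => ⟨⟨hbW, (branch_subset hbX).1⟩, fun hb =>
    hb₀ (by rw [branch, ← comp_eq_of_mem hbX]; exact mem_comp_comm.mp hb)⟩

lemma IsDeepTrifurcation.markSet_ssubset (hW : W.Finite) (hy : IsDeepTrifurcation G S W t y)
    (hC : Comp G S y = Comp G S x)
    (hdisj : Disjoint (localCluster G S t x) (localCluster G S t y))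
    (h₁ : b₀ ∈ branch G S t x y) (h₂ : b₀ ∉ branch G S t y x) :
    markSet G S W t x b₀ ⊂ markSet G S W t y b₀ := by
  have hsub := markSet_subset_branch hy hC hdisj h₁
  exact ⟨fun b hb => innerBoundary_inter_branch_subset_markSet h₂ ⟨hb.1.1, hsub hb⟩,
    fun h => hy.not_markSet_subset_branch hW b₀ x (h.trans hsub)⟩

lemma disjoint_markSet (hy : IsDeepTrifurcation G S W t y)
    (hC : Comp G S y = Comp G S x) (hdisj : Disjoint (localCluster G S t x) (localCluster G S t y))
    (h₁ : b₀ ∈ branch G S t x y) (h₂ : b₀ ∈ branch G S t y x) :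
    Disjoint (markSet G S W t x b₀) (markSet G S W t y b₀) :=
  Set.disjoint_left.mpr fun _ hbx hby => hby.2 <| by
    rw [branch, comp_eq_of_mem h₂]
    exact markSet_subset_branch hy hC hdisj h₁ hbx

lemma IsDeepTrifurcation.markSet_laminar (hW : W.Finite) (hx : IsDeepTrifurcation G S W t x)
    (hy : IsDeepTrifurcation G S W t y) (hsep : y ∉ GraphBall G x (2 * t + 1))
    (hC : Comp G S y = Comp G S x) (hb₀ : b₀ ∈ InnerBoundary G W ∩ Comp G S x) :
    (markSet G S W t x b₀ ⊆ markSet G S W t y b₀ ∨ markSet G S W t y b₀ ⊆ markSet G S W t x b₀ ∨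
      Disjoint (markSet G S W t x b₀) (markSet G S W t y b₀)) ∧
      markSet G S W t x b₀ ≠ markSet G S W t y b₀ := by
  have hdisj : Disjoint (localCluster G S t x) (localCluster G S t y) := disjoint_localCluster hsep
  by_cases h₁ : b₀ ∈ branch G S t x y
  · by_cases h₂ : b₀ ∈ branch G S t y x
    · have hd := disjoint_markSet hy hC hdisj h₁ h₂
      obtain ⟨b, hb, -⟩ := hy.exists_mem_markSet hW b₀
      exact ⟨Or.inr (Or.inr hd), fun h => Set.disjoint_left.mp hd (h ▸ hb) hb⟩
    · have h := hy.markSet_ssubset hW hC hdisj h₁ h₂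
      exact ⟨Or.inl h.subset, h.ne⟩
  · have h₂ : b₀ ∈ branch G S t y x := (mem_branch_or_mem_branch hy.isTrifurcation.1 hC hdisj
      hb₀.2 (hy.notMem_localCluster hb₀.1)).resolve_right h₁
    have h := hx.markSet_ssubset hW hC.symm hdisj.symm h₂ h₁
    exact ⟨Or.inr (Or.inl h.subset), h.ne'⟩

end Trifurcation

section Counting

variable {S W : Set V} {t : ℕ}

lemma ncard_le_mul_ncard_of_forall_mem_graphBall (hlf : ∀ v : V, (G.neighborSet v).Finite)
    (htrans : ∀ x y : V, ∃ φ : G ≃g G, φ x = y) (x₀ : V) (r : ℕ) {T N : Set V} (hN : N.Finite)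
    (hcov : ∀ z ∈ T, ∃ y ∈ N, z ∈ GraphBall G y r) :
    T.ncard ≤ (GraphBall G x₀ r).ncard * N.ncard := by
  classical
  calc T.ncard ≤ (⋃ y ∈ hN.toFinset, GraphBall G y r).ncard :=
        Set.ncard_le_ncard (fun z hz => by simpa using hcov z hz)
          (hN.toFinset.finite_toSet.biUnion fun y _ => graphBall_finite hlf y r)
    _ ≤ ∑ y ∈ hN.toFinset, (GraphBall G y r).ncard := Finset.set_ncard_biUnion_le _ _
    _ = (GraphBall G x₀ r).ncard * N.ncard := by
        simp [ncard_graphBall_eq htrans x₀, Set.ncard_eq_toFinset_card _ hN, mul_comm]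

lemma ncard_le_ncard_innerBoundary_of_near (hW : W.Finite) {T : Set V}
    (hsep : T.Pairwise fun x y => y ∉ GraphBall G x (2 * t + 1))
    (hnear : ∀ x ∈ T, ¬ Disjoint (InnerBoundary G W) (GraphBall G x t)) :
    T.ncard ≤ (InnerBoundary G W).ncard := by
  choose! b hbW hbx using fun x hx => Set.not_disjoint_iff.mp (hnear x hx)
  refine Set.ncard_le_ncard_of_injOn b hbW (fun x hx y hy hxy => by_contra fun hne =>
    hsep hx hy hne ?_) (hW.subset fun _ h => h.1)
  exact graphBall_mono (by omega) (mem_graphBall_add (hbx x hx) (hxy ▸ hbx y hy))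

lemma ncard_le_of_isDeepTrifurcation (hW : W.Finite) {T : Set V}
    (hsep : T.Pairwise fun x y => y ∉ GraphBall G x (2 * t + 1))
    (hdeep : ∀ x ∈ T, IsDeepTrifurcation G S W t x) :
    T.ncard ≤ 2 * (InnerBoundary G W).ncard - 1 := by
  rcases T.eq_empty_or_nonempty with rfl | ⟨x₁, -⟩
  · simp
  have : Nonempty V := ⟨x₁⟩
  -- the mark sets of trifurcations in one cluster must use a common reference vertex
  set base : Set V → V := fun C => Classical.epsilon (· ∈ InnerBoundary G W ∩ C)
  have hbase : ∀ x ∈ T, base (Comp G S x) ∈ InnerBoundary G W ∩ Comp G S x := fun x hx =>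
    Classical.epsilon_spec <| innerBoundary_inter_comp_nonempty hW
      (hdeep x hx).isTrifurcation.2.1 (mem_comp_self (hdeep x hx).isTrifurcation.1) (hdeep x hx).mem
  refine Set.ncard_le_two_mul_ncard_sub_one_of_laminar
    (f := fun x => markSet G S W t x (base (Comp G S x))) (hW.subset fun x hx => (hdeep x hx).mem)
    (hW.subset fun _ h => h.1) (fun _ _ _ hb => hb.1.1) (fun x hx => ?_) (fun x hx y hy hxy => ?_)
  · obtain ⟨b, hb, -⟩ := (hdeep x hx).exists_mem_markSet hW (base (Comp G S x))
    exact ⟨b, hb⟩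
  by_cases hC : Comp G S y = Comp G S x
  · simp only [hC]
    exact (hdeep x hx).markSet_laminar hW (hdeep y hy) (hsep hx hy hxy) hC (hbase x hx)
  · have hd : Disjoint (markSet G S W t x (base (Comp G S x)))
        (markSet G S W t y (base (Comp G S y))) :=
      Set.disjoint_left.mpr fun b hbx hby => hC (comp_eq_comp_of_mem hby.1.2 hbx.1.2)
    obtain ⟨b, hb, -⟩ := (hdeep x hx).exists_mem_markSet hW (base (Comp G S x))
    exact ⟨Or.inr (Or.inr hd), fun h => Set.disjoint_left.mp hd hb (h ▸ hb)⟩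

theorem ncard_trifurcation_le (hlf : ∀ v : V, (G.neighborSet v).Finite)
    (htrans : ∀ x y : V, ∃ φ : G ≃g G, φ x = y) (x₀ : V) (hW : W.Finite) :
    {x ∈ W | IsTrifurcation G S t x}.ncard ≤
      3 * (GraphBall G x₀ (2 * t + 1)).ncard * (InnerBoundary G W).ncard := by
  let r : V → V → Prop := fun x y => y ∈ GraphBall G x (2 * t + 1)
  have : Std.Refl r := ⟨fun _ => mem_graphBall_self⟩
  have : Std.Symm r := ⟨fun _ _ => mem_graphBall_comm.mp⟩
  have hT : {x ∈ W | IsTrifurcation G S t x}.Finite := hW.subset (Set.sep_subset _ _)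
  obtain ⟨N, hNT, hsep, hcov⟩ := hT.exists_subset_pairwise_not_forall_exists (r := r)
  have hN : N.Finite := hW.subset fun x hx => (hNT hx).1
  set near := {x | ¬ Disjoint (InnerBoundary G W) (GraphBall G x t)}
  have h_near : (N ∩ near).ncard ≤ (InnerBoundary G W).ncard :=
    ncard_le_ncard_innerBoundary_of_near hW (hsep.mono Set.inter_subset_left) fun x hx => hx.2
  have h_deep : (N \ near).ncard ≤ 2 * (InnerBoundary G W).ncard - 1 :=
    ncard_le_of_isDeepTrifurcation hW (hsep.mono Set.sdiff_subset) fun x hx =>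
      ⟨(hNT hx.1).1, (hNT hx.1).2, not_not.mp hx.2⟩
  have hN3 : N.ncard ≤ 3 * (InnerBoundary G W).ncard := by
    rw [← Set.ncard_inter_add_ncard_sdiff_eq_ncard N near hN]
    omega
  calc _ ≤ (GraphBall G x₀ (2 * t + 1)).ncard * N.ncard :=
        ncard_le_mul_ncard_of_forall_mem_graphBall hlf htrans x₀ _ hN hcov
    _ ≤ (GraphBall G x₀ (2 * t + 1)).ncard * (3 * (InnerBoundary G W).ncard) :=
        Nat.mul_le_mul_left _ hN3
    _ = _ := by ring

end Counting

theorem mul_ncard_le_of_le_measure_isTrifurcation (hlf : ∀ v : V, (G.neighborSet v).Finite)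
    (htrans : ∀ x y : V, ∃ φ : G ≃g G, φ x = y) (x₀ : V) {t : ℕ} {Ω : Type*} [MeasurableSpace Ω]
    (P : Measure Ω) [IsProbabilityMeasure P] (S : Ω → Set V)
    (hmeas : ∀ x : V, MeasurableSet {ω | IsTrifurcation G (S ω) t x}) {c : ℝ}
    (hP : ∀ x : V, c ≤ (P {ω | IsTrifurcation G (S ω) t x}).toReal) {W : Set V} (hW : W.Finite) :
    c * W.ncard ≤ 3 * (GraphBall G x₀ (2 * t + 1)).ncard * (InnerBoundary G W).ncard := by
  set N := 3 * (GraphBall G x₀ (2 * t + 1)).ncard * (InnerBoundary G W).ncard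
  have hsum : ∑ x ∈ hW.toFinset, P {ω | IsTrifurcation G (S ω) t x} ≤ N := by
    simpa using sum_measure_le_of_forall_card_le P hW.toFinset (fun x _ => hmeas x) fun ω => by
      rw [← Set.ncard_coe_finset]
      convert ncard_trifurcation_le (S := S ω) hlf htrans x₀ hW using 2
      ext x
      simp
  calc c * W.ncard = ∑ x ∈ hW.toFinset, c := by simp [Set.ncard_eq_toFinset_card _ hW, mul_comm]
    _ ≤ ∑ x ∈ hW.toFinset, (P {ω | IsTrifurcation G (S ω) t x}).toReal :=
        Finset.sum_le_sum fun x _ => hP x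
    _ = (∑ x ∈ hW.toFinset, P {ω | IsTrifurcation G (S ω) t x}).toReal :=
        (ENNReal.toReal_sum fun _ _ => measure_ne_top _ _).symm
    _ ≤ _ := by simpa [N] using ENNReal.toReal_mono (by simp) hsum

end

theorem stmt6_general {V : Type*} (G : SimpleGraph V)
    (hlf : ∀ v : V, (G.neighborSet v).Finite)
    (htrans : ∀ x y : V, ∃ φ : G ≃g G, φ x = y)
    (x₀ : V) (t : ℕ) (m m' : ℕ)
    (hm : m = (GraphBall G x₀ (2 * t + 1)).ncard)
    (hm' : m' = (GraphBall G x₀ (t + 1)).ncard)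
    {Ω : Type*} [MeasurableSpace Ω] (P : Measure Ω) [IsProbabilityMeasure P]
    (S : Ω → Set V)
    (hmeas : ∀ x : V, MeasurableSet {ω | IsTrifurcation G (S ω) t x})
    (c : ℝ) (hc : 0 < c)
    (hP : ∀ x : V, c ≤ (P {ω | IsTrifurcation G (S ω) t x}).toReal) :
    (∀ W : Set V, W.Finite → W.Nonempty →
      c / (m * m') ≤ ((InnerBoundary G W).ncard : ℝ) / (W.ncard : ℝ)) ∧
    0 < sInf {r : ℝ | ∃ A : Set V, A.Finite ∧ A.Nonempty ∧
      r = ((InnerBoundary G A).ncard : ℝ) / (A.ncard : ℝ)} := by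
  obtain ⟨ω, hω⟩ : ∃ ω, IsTrifurcation G (S ω) t x₀ := by
    by_contra! h
    have := hP x₀
    simp only [h, Set.ofPred_false, measure_empty, ENNReal.toReal_zero] at this
    linarith
  have h3m' : (3 : ℝ) ≤ m' := by exact_mod_cast hm' ▸ hω.three_le_ncard_graphBall hlf
  have hm_pos : (0 : ℝ) < m := by
    exact_mod_cast hm ▸ (Set.ncard_pos (graphBall_finite hlf x₀ _)).mpr ⟨x₀, mem_graphBall_self⟩
  have hbound : ∀ W : Set V, W.Finite → W.Nonempty →
      c / (m * m') ≤ ((InnerBoundary G W).ncard : ℝ) / (W.ncard : ℝ) := fun W hW hne => by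
    rw [div_le_div_iff₀ (by positivity) (by exact_mod_cast (Set.ncard_pos hW).mpr hne)]
    have hcount := mul_ncard_le_of_le_measure_isTrifurcation hlf htrans x₀ P S hmeas hP hW
    calc c * W.ncard ≤ 3 * m * (InnerBoundary G W).ncard := by exact_mod_cast hm ▸ hcount
      _ ≤ m' * m * (InnerBoundary G W).ncard := by gcongr
      _ = _ := by ring
  refine ⟨hbound, (div_pos hc (by positivity : (0 : ℝ) < m * m')).trans_le (le_csInf
    ⟨_, {x₀}, Set.finite_singleton x₀, Set.singleton_nonempty x₀, rfl⟩ ?_)⟩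
  rintro _ ⟨A, hA, hne, rfl⟩
  exact hbound A hA hne

theorem stmt6 {V : Type*} (G : SimpleGraph V)
    (hconn : G.Connected)
    (hlf : ∀ v : V, (G.neighborSet v).Finite)
    (htrans : ∀ x y : V, ∃ φ : G ≃g G, φ x = y)
    (x₀ : V) (t : ℕ) (m m' : ℕ)
    (hm : m = (GraphBall G x₀ (2 * t + 1)).ncard)
    (hm' : m' = (GraphBall G x₀ (t + 1)).ncard)
    {Ω : Type*} [MeasurableSpace Ω] (P : Measure Ω) [IsProbabilityMeasure P]
    (S : Ω → Set V)
    (hmeas : ∀ x : V, MeasurableSet {ω | IsTrifurcation G (S ω) t x})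
    (c : ℝ) (hc : 0 < c)
    (hP : ∀ x : V, c ≤ (P {ω | IsTrifurcation G (S ω) t x}).toReal) :
    (∀ W : Set V, W.Finite → W.Nonempty →
      c / (m * m') ≤ ((InnerBoundary G W).ncard : ℝ) / (W.ncard : ℝ)) ∧
    0 < sInf {r : ℝ | ∃ A : Set V, A.Finite ∧ A.Nonempty ∧
      r = ((InnerBoundary G A).ncard : ℝ) / (A.ncard : ℝ)} :=
  stmt6_general G hlf htrans x₀ t m m' hm hm' P S hmeas c hc hP
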